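/- Let Cat(m) = C(2m,m)/(m+1). Let c : ℕ → ℚ satisfy c(0) = 0 and, for every q ≥ 0, c(q+1) = Cat(q+2) + 2·Σ_{k=0}^{q} Cat(q−k)·c(k). Then for every q ≥ 0, c(q) = (3q/(q+2))·C(2q,q). -/
import Mathlib

open Finset

private def gQ (k : ℕ) : ℚ := catalan k

private lemma hB (k : ℕ) : ((2 * k).choose k : ℚ) = ((k : ℚ) + 1) * gQ k := by
  have h : (k + 1) * catalan k = (2 * k).choose k := succ_mul_catalan_eq_centralBinom k
  have := congrArg (Nat.cast (R := ℚ)) h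
  push_cast at this
  rw [← this]; simp [gQ]

private lemma hgq (m : ℕ) : ((2 * m).choose m : ℚ) / ((m : ℚ) + 1) = gQ m := by
  rw [hB]
  have : ((m : ℚ) + 1) ≠ 0 := by positivity
  field_simp

private lemma hrelQ (n : ℕ) : ((n : ℚ) + 2) * gQ (n + 1) = (4 * n + 2) * gQ n := by
  have h1 : ((n : ℚ) + 2) * gQ (n + 1) = ((n + 1).centralBinom : ℚ) := by
    have := congrArg (Nat.cast (R := ℚ)) (succ_mul_catalan_eq_centralBinom (n + 1))
    push_cast at this
    simp only [gQ]
    linear_combination this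
  have h2 : ((n : ℚ) + 1) * ((n + 1).centralBinom : ℚ) = 2 * (2 * n + 1) * (n.centralBinom : ℚ) := by
    exact_mod_cast congrArg (Nat.cast (R := ℚ)) (Nat.succ_mul_centralBinom_succ n)
  have h3 : (n.centralBinom : ℚ) = ((n : ℚ) + 1) * gQ n := by
    have := congrArg (Nat.cast (R := ℚ)) (succ_mul_catalan_eq_centralBinom n)
    push_cast at this
    rw [← this]; simp [gQ]
  have hne : ((n : ℚ) + 1) ≠ 0 := by positivity
  apply mul_left_cancel₀ hne
  linear_combination ((n : ℚ) + 1) * h1 + h2 + (2 * (2 * (n : ℚ) + 1)) * h3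

/-- Catalan convolution over range. -/
private lemma conv (n : ℕ) :
    ∑ k ∈ range (n + 1), gQ k * gQ (n - k) = gQ (n + 1) := by
  simp only [gQ]
  rw [catalan_succ n,
    Fin.sum_univ_eq_sum_range (fun i => catalan i * catalan (n - i)) (n + 1)]
  push_cast
  rfl

private noncomputable def fQ (k : ℕ) : ℚ := 3 * (k : ℚ) / ((k : ℚ) + 2) * ((2 * k).choose k : ℚ)

private lemma fQ_eq (k : ℕ) : fQ k = 3 * ((k : ℚ) + 1) * gQ k - gQ (k + 1) - 2 * gQ k := by
  have hne : ((k : ℚ) + 2) ≠ 0 := by positivity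
  have h := hrelQ k
  rw [fQ, hB]
  field_simp
  linear_combination h

theorem second_order_g2_coefficient (c : ℕ → ℚ)
    (h0 : c 0 = 0)
    (hrec : ∀ q : ℕ, c (q + 1) =
      (Nat.choose (2 * (q + 2)) (q + 2) : ℚ) / ((q + 2) + 1) +
      2 * ∑ k ∈ Finset.range (q + 1),
        ((Nat.choose (2 * (q - k)) (q - k) : ℚ) / ((q - k : ℕ) + 1)) * c k) :
    ∀ q : ℕ, c q = (3 * (q : ℚ) / (q + 2)) * (Nat.choose (2 * q) q : ℚ) := by
  have key : ∀ q, c q = fQ q := by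
    intro q
    induction q using Nat.strong_induction_on with
    | _ q ih =>
      match q with
      | 0 => rw [h0]; simp [fQ]
      | q + 1 =>
        rw [hrec q]
        have hsum : ∑ k ∈ Finset.range (q + 1),
            ((Nat.choose (2 * (q - k)) (q - k) : ℚ) / ((q - k : ℕ) + 1)) * c k
            = ∑ k ∈ Finset.range (q + 1), gQ (q - k) * fQ k := by
          apply Finset.sum_congr rfl
          intro k hk
          rw [hgq (q - k), ih k (Finset.mem_range.mp hk)]
        rw [hsum]
        have hcat2 : (Nat.choose (2 * (q + 2)) (q + 2) : ℚ) / ((q : ℚ) + 2 + 1) = gQ (q + 2) := by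
          have := hgq (q + 2)
          push_cast at this
          convert this using 2
        rw [hcat2]
        -- split the sum using fQ_eq
        have hsplit : ∑ k ∈ Finset.range (q + 1), gQ (q - k) * fQ k
            = 3 * (∑ k ∈ Finset.range (q + 1), ((k : ℚ) + 1) * gQ k * gQ (q - k))
              - (∑ k ∈ Finset.range (q + 1), gQ (q - k) * gQ (k + 1))
              - 2 * (∑ k ∈ Finset.range (q + 1), gQ k * gQ (q - k)) := by
          rw [Finset.mul_sum, Finset.mul_sum, ← Finset.sum_sub_distrib, ← Finset.sum_sub_distrib]
          apply Finset.sum_congr rfl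
          intro k hk
          rw [fQ_eq]
          ring
        -- T: symmetry
        have hT : ∑ k ∈ Finset.range (q + 1), ((k : ℚ) + 1) * gQ k * gQ (q - k)
            = ((q : ℚ) + 2) * gQ (q + 1) / 2 := by
          have hrefl := Finset.sum_range_reflect
            (fun k => ((k : ℚ) + 1) * gQ k * gQ (q - k)) (q + 1)
          have h2T : 2 * (∑ k ∈ Finset.range (q + 1), ((k : ℚ) + 1) * gQ k * gQ (q - k))
              = ((q : ℚ) + 2) * gQ (q + 1) := by
            nth_rewrite 1 [two_mul]
            nth_rewrite 1 [← hrefl]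
            rw [← Finset.sum_add_distrib, ← conv q, Finset.mul_sum]
            apply Finset.sum_congr rfl
            intro k hk
            simp only [Finset.mem_range] at hk
            have hk' : k ≤ q := by omega
            have e1 : q + 1 - 1 - k = q - k := by omega
            have e2 : q - (q - k) = k := by omega
            rw [e1, e2]
            have ec : ((q - k : ℕ) : ℚ) = (q : ℚ) - (k : ℚ) := by
              push_cast [Nat.cast_sub hk']; ring
            rw [ec]
            ring
          linarith
        -- shifted sum
        have hShift : ∑ k ∈ Finset.range (q + 1), gQ (q - k) * gQ (k + 1)
            = gQ (q + 2) - gQ (q + 1) := by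
          have h1 : ∑ k ∈ Finset.range (q + 2), gQ (q + 1 - k) * gQ k = gQ (q + 2) := by
            rw [← conv (q + 1)]
            apply Finset.sum_congr rfl
            intro k hk; ring
          have h2 := Finset.sum_range_succ' (fun k => gQ (q + 1 - k) * gQ k) (q + 1)
          rw [h1] at h2
          have h3 : ∑ k ∈ Finset.range (q + 1), gQ (q + 1 - (k + 1)) * gQ (k + 1)
              = ∑ k ∈ Finset.range (q + 1), gQ (q - k) * gQ (k + 1) := by
            apply Finset.sum_congr rfl
            intro k hk
            congr 2
            omega
          rw [h3] at h2
          simp [gQ] at h2 ⊢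
          linarith
        rw [hsplit, hT, hShift, conv q]
        have hf : fQ (q + 1) = 3 * ((q : ℚ) + 2) * gQ (q + 1) - gQ (q + 2) - 2 * gQ (q + 1) := by
          rw [fQ_eq (q + 1)]
          push_cast
          ring
        rw [hf]
        ring
  intro q
  rw [key q, fQ]
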